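/- Let Γ be a commutative thick weakly distance-regular digraph in which C(q) exists (p^{(1,q-2)}_{(1,q-1),(1,q-1)} ≠ 0 and (1,q-2) is pure). Then Γ_{1,q-1} Γ_{1,q-2}^{i-1} = {Γ_{i,q-i}} for all 1 ≤ i ≤ q-1. -/

import Mathlib

/-!
Common framework: commutative thick weakly distance-regular digraphs.
-/

variable {V : Type*}

/-- There is a directed walk of length `n` from `x` to `y`. -/
def HasWalk (adj : V → V → Prop) (x y : V) (n : ℕ) : Prop :=
  ∃ f : ℕ → V, f 0 = x ∧ f n = y ∧ ∀ i < n, adj (f i) (f (i + 1))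

/-- Directed distance `∂(x,y)`. -/
noncomputable def ddist (adj : V → V → Prop) (x y : V) : ℕ :=
  sInf {n | HasWalk adj x y n}

/-- Two-way distance `∂̃(x,y) = (∂(x,y), ∂(y,x))`. -/
noncomputable def tdist (adj : V → V → Prop) (x y : V) : ℕ × ℕ :=
  (ddist adj x y, ddist adj y x)

/-- The pair `i` is an attained two-way distance, i.e. `i ∈ ∂̃(Γ)`. -/
def Attained (adj : V → V → Prop) (i : ℕ × ℕ) : Prop :=
  ∃ x y : V, tdist adj x y = i

/-- Intersection number `p^h_{i,j}`: for attained `h` it is the common cardinality of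
`{z | ∂̃(x,z) = i, ∂̃(z,y) = j}` over pairs with `∂̃(x,y) = h` (and `0` otherwise). -/
noncomputable def pnum (adj : V → V → Prop) (h i j : ℕ × ℕ) : ℕ :=
  sSup {n | ∃ x y : V, tdist adj x y = h ∧
    n = Set.ncard {z : V | tdist adj x z = i ∧ tdist adj z y = j}}

/-- Valency `k_i = |Γ_i(x)|`. -/
noncomputable def kval (adj : V → V → Prop) (i : ℕ × ℕ) : ℕ :=
  pnum adj (0, 0) i i.swap

/-- Adjacency of the subdigraph `Δ_J`: arcs of type `(1, t-1)` for `t ∈ J`. -/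
def deltaAdj (adj : V → V → Prop) (J : Set ℕ) (u v : V) : Prop :=
  ∃ t ∈ J, tdist adj u v = (1, t - 1)

/-- A circuit of length `s`. -/
def IsCircuit (adj : V → V → Prop) (s : ℕ) (f : ℕ → V) : Prop :=
  0 < s ∧ f s = f 0 ∧ ∀ i < s, adj (f i) (f (i + 1))

/-- Strongly connected. -/
def IsStrong (adj : V → V → Prop) : Prop :=
  ∀ x y : V, ∃ n, HasWalk adj x y n

/-- Weakly distance-regular: the intersection numbers are well defined. -/
def IsWDR (adj : V → V → Prop) : Prop :=
  ∀ (i j : ℕ × ℕ) (x y x' y' : V), tdist adj x y = tdist adj x' y' →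
    Set.ncard {z : V | tdist adj x z = i ∧ tdist adj z y = j}
      = Set.ncard {z : V | tdist adj x' z = i ∧ tdist adj z y' = j}

/-- Thick: `p^h_{i,i}, p^h_{i,i*} ∈ {0, k_i}`. -/
def IsThick (adj : V → V → Prop) : Prop :=
  ∀ h i : ℕ × ℕ,
    (pnum adj h i i = 0 ∨ pnum adj h i i = kval adj i) ∧
    (pnum adj h i i.swap = 0 ∨ pnum adj h i i.swap = kval adj i)

/-- A thick weakly distance-regular digraph (as a property of an adjacency relation). -/
def IsWDRThick (adj : V → V → Prop) : Prop :=
  IsStrong adj ∧ IsWDR adj ∧ IsThick adj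

/-- A commutative thick weakly distance-regular digraph. -/
structure CTWDR (V : Type*) [Fintype V] where
  adj : V → V → Prop
  loopless : ∀ v, ¬ adj v v
  strong : IsStrong adj
  wdr : IsWDR adj
  comm : ∀ (i j : ℕ × ℕ) (x y : V),
    Set.ncard {z : V | tdist adj x z = i ∧ tdist adj z y = j}
      = Set.ncard {z : V | tdist adj x z = j ∧ tdist adj z y = i}
  thick : IsThick adj

namespace CTWDR

variable {V : Type*} [Fintype V] (G : CTWDR V)

/-- Product `EF` of two sets of relations (relations identified with two-way distances). -/
def prodS (E F : Set (ℕ × ℕ)) : Set (ℕ × ℕ) :=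
  {h | ∃ i ∈ E, ∃ j ∈ F, pnum G.adj h i j ≠ 0}

/-- Powers `Γ_i^l` (with `Γ_i^0 = {Γ_{(0,0)}}` and `Γ_i^1 = {Γ_i}`). -/
def pow (i : ℕ × ℕ) : ℕ → Set (ℕ × ℕ)
  | 0 => {(0, 0)}
  | 1 => {i}
  | n + 2 => G.prodS (pow i (n + 1)) {i}

/-- The pair `(1, s-1)` is pure: every circuit of length `s` containing an arc of type
`(1, s-1)` consists of arcs of type `(1, s-1)`. -/
def Pure (s : ℕ) : Prop :=
  ∀ f : ℕ → V, IsCircuit G.adj s f →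
    (∃ i < s, tdist G.adj (f i) (f (i + 1)) = (1, s - 1)) →
    ∀ i < s, tdist G.adj (f i) (f (i + 1)) = (1, s - 1)

/-- `(1, s-1)` is mixed. -/
def Mixed (s : ℕ) : Prop := ¬ G.Pure s

/-- Configuration `C(q)` exists. -/
def Cexists (q : ℕ) : Prop :=
  pnum G.adj (1, q - 2) (1, q - 1) (1, q - 1) ≠ 0 ∧ G.Pure (q - 1)

/-- Configuration `D(q)` exists. -/
def Dexists (q : ℕ) : Prop :=
  pnum G.adj (1, q - 1) (1, q - 2) (q - 2, 1) ≠ 0 ∧ G.Pure (q - 1)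

/-- A closed set of relations: `Γ_{i*}Γ_j ⊆ F` for all `i, j ∈ F`. -/
def Closed (F : Set (ℕ × ℕ)) : Prop :=
  ∀ i ∈ F, ∀ j ∈ F, G.prodS {i.swap} {j} ⊆ F

/-- The minimal closed set `⟨F⟩` containing `F`. -/
def genClosed (F : Set (ℕ × ℕ)) : Set (ℕ × ℕ) :=
  ⋂₀ {C | F ⊆ C ∧ G.Closed C}

/-- The block `F_J(x)` of the closed set generated by `{Γ_{1,t-1}}_{t ∈ J}`. -/
def block (J : Set ℕ) (x : V) : Set V :=
  {y | tdist G.adj x y ∈ G.genClosed {i | ∃ t ∈ J, i = (1, t - 1)}}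

end CTWDR

/-!
Write `A = (1, s)` and `B = (1, s - 1)` with `s = q - 1`. Purity puts every `B`-arc on a circuit
of `s` arcs of type `B`, along which two-way distances are determined by positions. Thickness of
`p^{(2, s-2)}_{B,B}` lets such a circuit be rerouted through any `B`-path of length `< s`, so
`B`-paths have the same distances and `B^m = {(m, s - m)}`. Given an `A`-arc `x → p 0` followed by
a `B`-path `p` of length `j`, thickness of `p^B_{A,A}` makes `x` an `A`-out-neighbour of the vertex
preceding `p 0` on such a circuit; this yields `∂̃(x, p j) ≤ (j + 1, s - j)`. The first coordinate
cannot be `j`: a `B`-path of length `j` from `x` would start with an `A`-out-neighbour of `p 0`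
(thickness again) that returns to `p 0` in `s - 1` steps.
-/
section Walks

variable {adj : V → V → Prop}

theorem hasWalk_one_iff {x y : V} : HasWalk adj x y 1 ↔ adj x y := by
  constructor
  · rintro ⟨f, rfl, rfl, hf⟩
    exact hf 0 one_pos
  · intro h
    refine ⟨Stream'.cons x fun _ => y, rfl, rfl, fun t ht => ?_⟩
    obtain rfl : t = 0 := by omega
    exact h

theorem HasWalk.append {x y z : V} {m n : ℕ} (h₁ : HasWalk adj x y m) (h₂ : HasWalk adj y z n) :
    HasWalk adj x z (m + n) := by
  obtain ⟨f, rfl, rfl, hf⟩ := h₁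
  obtain ⟨g, hg0, rfl, hg⟩ := h₂
  refine ⟨fun t => if t ≤ m then f t else g (t - m), by simp, ?_, fun t ht => ?_⟩
  · rcases n.eq_zero_or_pos with rfl | hn
    · simp [hg0]
    · simp [show ¬ m + n ≤ m by omega]
  · rcases lt_trichotomy t m with h | rfl | h
    · simpa [h.le, Nat.succ_le_of_lt h] using hf t h
    · simpa [hg0] using hg 0 (by omega)
    · simpa [h.not_ge, show ¬ t + 1 ≤ m by omega, show t + 1 - m = t - m + 1 by omega]
        using hg (t - m) (by omega)

theorem hasWalk_of_forall_adj {p : ℕ → V} {a b : ℕ} (hab : a ≤ b)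
    (h : ∀ t, a ≤ t → t < b → adj (p t) (p (t + 1))) : HasWalk adj (p a) (p b) (b - a) :=
  ⟨fun t => p (a + t), rfl, by simp only [Nat.add_sub_cancel' hab],
    fun t ht => h (a + t) (by omega) (by omega)⟩

theorem ddist_le_of_hasWalk {x y : V} {n : ℕ} (h : HasWalk adj x y n) : ddist adj x y ≤ n :=
  Nat.sInf_le h

theorem ddist_self (x : V) : ddist adj x x = 0 :=
  Nat.le_zero.mp (ddist_le_of_hasWalk ⟨fun _ => x, rfl, rfl, fun _ h => (Nat.not_lt_zero _ h).elim⟩)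

theorem tdist_self (x : V) : tdist adj x x = (0, 0) := by
  simp [tdist, ddist_self]

theorem tdist_eq_iff {x y : V} {a b : ℕ} :
    tdist adj x y = (a, b) ↔ ddist adj x y = a ∧ ddist adj y x = b :=
  Prod.ext_iff

theorem hasWalk_ddist (hS : IsStrong adj) (x y : V) : HasWalk adj x y (ddist adj x y) :=
  Nat.sInf_mem (hS x y)

theorem ddist_triangle (hS : IsStrong adj) (x y z : V) :
    ddist adj x z ≤ ddist adj x y + ddist adj y z :=
  ddist_le_of_hasWalk ((hasWalk_ddist hS x y).append (hasWalk_ddist hS y z))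

theorem eq_of_ddist_eq_zero (hS : IsStrong adj) {x y : V} (h : ddist adj x y = 0) : x = y := by
  have hw := hasWalk_ddist hS x y
  rw [h] at hw
  obtain ⟨f, rfl, rfl, -⟩ := hw
  rfl

theorem adj_of_ddist_eq_one (hS : IsStrong adj) {x y : V} (h : ddist adj x y = 1) : adj x y := by
  have hw := hasWalk_ddist hS x y
  rw [h] at hw
  exact hasWalk_one_iff.1 hw

def IsTypedPath (adj : V → V → Prop) (i : ℕ × ℕ) (n : ℕ) (p : ℕ → V) : Prop :=
  ∀ t < n, tdist adj (p t) (p (t + 1)) = i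

theorem IsTypedPath.cons {i : ℕ × ℕ} {n : ℕ} {x : V} {p : ℕ → V}
    (hx : tdist adj x (p 0) = i) (hp : IsTypedPath adj i n p) :
    IsTypedPath adj i (n + 1) (Stream'.cons x p)
  | 0, _ => hx
  | t + 1, ht => hp t (by omega)

theorem IsTypedPath.hasWalk (hS : IsStrong adj) {k n : ℕ} {p : ℕ → V}
    (hp : IsTypedPath adj (1, k) n p) {a b : ℕ} (hab : a ≤ b) (hb : b ≤ n) :
    HasWalk adj (p a) (p b) (b - a) :=
  hasWalk_of_forall_adj hab fun t _ htb =>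
    adj_of_ddist_eq_one hS (tdist_eq_iff.1 (hp t (by omega))).1

theorem tdist_of_circuit (hS : IsStrong adj) {s : ℕ} {c : ℕ → V} (hc : c s = c 0)
    (hp : IsTypedPath adj (1, s - 1) s c) {a b : ℕ} (hab : a < b) (hb : b ≤ s)
    (hba : b - a < s) : tdist adj (c a) (c b) = (b - a, s - (b - a)) := by
  have along {u v : ℕ} (huv : u ≤ v) (hv : v ≤ s) : ddist adj (c u) (c v) ≤ v - u :=
    ddist_le_of_hasWalk (hp.hasWalk hS huv hv)
  have around {u v : ℕ} (huv : u ≤ v) (hv : v ≤ s) : ddist adj (c v) (c u) ≤ s - v + u := by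
    have hw := hp.hasWalk hS hv le_rfl
    rw [hc] at hw
    simpa using ddist_le_of_hasWalk (hw.append (hp.hasWalk hS (Nat.zero_le u) (by omega)))
  have back {t : ℕ} (ht : t < s) : ddist adj (c (t + 1)) (c t) = s - 1 :=
    (tdist_eq_iff.1 (hp t ht)).2
  have hfwd : b - a ≤ ddist adj (c a) (c b) := by
    rcases hb.lt_or_eq with hb | rfl
    · have := ddist_triangle hS (c (b + 1)) (c a) (c b)
      have := around (u := a) (v := b + 1) (by omega) hb
      have := back hb
      omega
    · have := ddist_triangle hS (c (0 + 1)) (c a) (c 0)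
      have := along (u := 0 + 1) (v := a) (by omega) (by omega)
      have := back (t := 0) (by omega)
      rw [hc]
      omega
  have hbwd : s - (b - a) ≤ ddist adj (c b) (c a) := by
    have := ddist_triangle hS (c (a + 1)) (c b) (c a)
    have := along (u := a + 1) (v := b) hab hb
    have := back (t := a) (by omega)
    omega
  have := along hab.le hb
  have := around hab.le hb
  exact tdist_eq_iff.2 ⟨by omega, by omega⟩

end Walks

namespace CTWDR

variable [Fintype V] (G : CTWDR V)

theorem pnum_eq_ncard {h i j : ℕ × ℕ} {x y : V} (hxy : tdist G.adj x y = h) :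
    pnum G.adj h i j = {z | tdist G.adj x z = i ∧ tdist G.adj z y = j}.ncard := by
  refine le_antisymm (csSup_le ⟨_, x, y, hxy, rfl⟩ ?_) (le_csSup ⟨Nat.card V, ?_⟩ ⟨x, y, hxy, rfl⟩)
  · rintro n ⟨x', y', hxy', rfl⟩
    exact (G.wdr i j x' y' x y (hxy'.trans hxy.symm)).le
  · rintro n ⟨x', y', -, rfl⟩
    exact Set.ncard_le_card _

theorem pnum_ne_zero_iff {h i j : ℕ × ℕ} : pnum G.adj h i j ≠ 0 ↔
    ∃ x y z, tdist G.adj x y = h ∧ tdist G.adj x z = i ∧ tdist G.adj z y = j := by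
  constructor
  · intro hp
    obtain ⟨x, y, hxy⟩ : ∃ x y, tdist G.adj x y = h := by
      by_contra! hno
      exact hp (by simp [pnum, hno])
    rw [pnum_eq_ncard G hxy] at hp
    obtain ⟨z, hz⟩ := Set.nonempty_of_ncard_ne_zero hp
    exact ⟨x, y, z, hxy, hz⟩
  · rintro ⟨x, y, z, hxy, hxz, hzy⟩
    rw [pnum_eq_ncard G hxy]
    exact Set.ncard_ne_zero_of_mem (show z ∈ {z | _ ∧ _} from ⟨hxz, hzy⟩)

theorem exists_of_pnum_ne_zero {h i j : ℕ × ℕ} (hp : pnum G.adj h i j ≠ 0) {x y : V}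
    (hxy : tdist G.adj x y = h) : ∃ z, tdist G.adj x z = i ∧ tdist G.adj z y = j := by
  rw [pnum_eq_ncard G hxy] at hp
  exact Set.nonempty_of_ncard_ne_zero hp

theorem pnum_comm (h i j : ℕ × ℕ) : pnum G.adj h i j = pnum G.adj h j i := by
  simp only [pnum, G.comm i j]

theorem prodS_comm (E F : Set (ℕ × ℕ)) : G.prodS E F = G.prodS F E := by
  ext h
  simp only [prodS, Set.mem_ofPred_eq]
  exact ⟨fun ⟨i, hi, j, hj, hp⟩ => ⟨j, hj, i, hi, pnum_comm G h i j ▸ hp⟩,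
    fun ⟨j, hj, i, hi, hp⟩ => ⟨i, hi, j, hj, pnum_comm G h j i ▸ hp⟩⟩

theorem prodS_singleton_eq {i j h : ℕ × ℕ}
    (hex : ∃ x y z, tdist G.adj x z = i ∧ tdist G.adj z y = j)
    (hdet : ∀ x y z, tdist G.adj x z = i → tdist G.adj z y = j → tdist G.adj x y = h) :
    G.prodS {i} {j} = {h} := by
  ext h'
  simp only [prodS, Set.mem_singleton_iff, exists_eq_left, Set.mem_ofPred_eq, pnum_ne_zero_iff]
  constructor
  · rintro ⟨x, y, z, rfl, hxz, hzy⟩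
    exact hdet x y z hxz hzy
  · rintro rfl
    obtain ⟨x, y, z, hxz, hzy⟩ := hex
    exact ⟨x, y, z, hdet x y z hxz hzy, hxz, hzy⟩

theorem prodS_singleton_zero {i : ℕ × ℕ} (hi : Attained G.adj i) : G.prodS {i} {(0, 0)} = {i} := by
  obtain ⟨x, y, hxy⟩ := hi
  refine G.prodS_singleton_eq ⟨x, y, y, hxy, tdist_self y⟩ fun x y z hxz hzy => ?_
  obtain rfl := eq_of_ddist_eq_zero G.strong (tdist_eq_iff.1 hzy).1
  exact hxz

theorem kval_eq_ncard (i : ℕ × ℕ) (x : V) : kval G.adj i = {z | tdist G.adj x z = i}.ncard := by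
  rw [kval, pnum_eq_ncard G (tdist_self x)]
  congr 1
  ext z
  exact ⟨And.left, fun hz => ⟨hz, hz ▸ rfl⟩⟩

theorem kval_eq_ncard_in (i : ℕ × ℕ) (y : V) : kval G.adj i = {z | tdist G.adj z y = i}.ncard := by
  have hswap : kval G.adj i = kval G.adj i.swap := by
    rw [kval, kval, pnum_eq_ncard G (tdist_self y), pnum_eq_ncard G (tdist_self y), Prod.swap_swap]
    exact G.comm i i.swap y y
  rw [hswap, kval_eq_ncard G i.swap y]
  congr 1
  ext z
  exact Prod.swap_injective.eq_iff (a := tdist G.adj z y) (b := i)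

theorem tdist_eq_of_pnum_ne_zero_out {h i : ℕ × ℕ} (hp : pnum G.adj h i i ≠ 0) {x y z : V}
    (hxy : tdist G.adj x y = h) (hxz : tdist G.adj x z = i) : tdist G.adj z y = i := by
  have hk := (G.thick h i).1.resolve_left hp
  rw [pnum_eq_ncard G hxy, kval_eq_ncard G i x] at hk
  exact (Set.eq_of_subset_of_ncard_le (fun w hw => hw.1) hk.ge (Set.toFinite _) |>.ge hxz).2

theorem tdist_eq_of_pnum_ne_zero_in {h i : ℕ × ℕ} (hp : pnum G.adj h i i ≠ 0) {x y z : V}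
    (hxy : tdist G.adj x y = h) (hzy : tdist G.adj z y = i) : tdist G.adj x z = i := by
  have hk := (G.thick h i).1.resolve_left hp
  rw [pnum_eq_ncard G hxy, kval_eq_ncard_in G i y] at hk
  exact (Set.eq_of_subset_of_ncard_le (fun w hw => hw.2) hk.ge (Set.toFinite _) |>.ge hzy).1

theorem exists_tdist_eq {i : ℕ × ℕ} (hi : Attained G.adj i) (u : V) : ∃ v, tdist G.adj u v = i := by
  obtain ⟨x, y, hxy⟩ := hi
  have hne := Set.ncard_ne_zero_of_mem (show y ∈ {z | tdist G.adj x z = i} from hxy)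
  rw [← kval_eq_ncard, kval_eq_ncard G i u] at hne
  exact Set.nonempty_of_ncard_ne_zero hne

theorem exists_typedPath {i : ℕ × ℕ} (hi : Attained G.adj i) (u : V) :
    ∃ p : ℕ → V, p 0 = u ∧ ∀ n, IsTypedPath G.adj i n p := by
  choose f hf using G.exists_tdist_eq hi
  refine ⟨fun t => f^[t] u, rfl, fun n t _ => ?_⟩
  simp only [Function.iterate_succ_apply']
  exact hf _

variable {G} {s : ℕ}

theorem Pure.exists_circuit (hs : G.Pure s) {x y : V} (hxy : tdist G.adj x y = (1, s - 1)) :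
    ∃ c : ℕ → V, c s = c 0 ∧ IsTypedPath G.adj (1, s - 1) s c ∧ c 0 = x ∧ c 1 = y := by
  obtain ⟨hxy₁, hyx⟩ := tdist_eq_iff.1 hxy
  have hs₂ : 2 ≤ s := by
    by_contra! h
    obtain rfl : y = x := eq_of_ddist_eq_zero G.strong (by omega)
    rw [ddist_self] at hxy₁
    exact zero_ne_one hxy₁
  obtain ⟨f, hf₀, hf, hf_adj⟩ := hasWalk_ddist G.strong y x
  rw [hyx] at hf hf_adj
  have hc : Stream'.cons x f s = Stream'.cons x f 0 := by
    obtain ⟨s', rfl⟩ : ∃ s', s = s' + 1 := ⟨s - 1, by omega⟩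
    exact hf
  have hcirc : IsCircuit G.adj s (Stream'.cons x f) := by
    refine ⟨by omega, hc, fun t ht => ?_⟩
    rcases t with _ | t
    · show G.adj x (f 0)
      exact hf₀ ▸ adj_of_ddist_eq_one G.strong hxy₁
    · exact hf_adj t (by omega)
  refine ⟨Stream'.cons x f, hc, hs _ hcirc ⟨0, by omega, ?_⟩, rfl, hf₀⟩
  show tdist G.adj x (f 0) = _
  rwa [hf₀]

theorem Pure.exists_circuit_of_path (hs : G.Pure s) {j : ℕ} {p : ℕ → V}
    (hp : IsTypedPath G.adj (1, s - 1) j p) (hj : 1 ≤ j) (hjs : j < s) :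
    ∃ c : ℕ → V, c s = c 0 ∧ IsTypedPath G.adj (1, s - 1) s c ∧ ∀ t ≤ j, c t = p t := by
  induction j, hj using Nat.le_induction with
  | base =>
    obtain ⟨c, hc, hcp, hc₀, hc₁⟩ := hs.exists_circuit (hp 0 one_pos)
    exact ⟨c, hc, hcp, fun t ht => by interval_cases t <;> assumption⟩
  | succ j hj ih =>
    obtain ⟨c, hc, hcp, hcq⟩ := ih (fun t ht => hp t (by omega)) (by omega)
    have h₂ : tdist G.adj (c j) (c (j + 2)) = (2, s - 2) := by
      simpa using tdist_of_circuit G.strong hc hcp (a := j) (b := j + 2) (by omega) (by omega)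
        (by omega)
    have hpj : tdist G.adj (c j) (p (j + 1)) = (1, s - 1) := hcq j le_rfl ▸ hp j (by omega)
    have hnew : tdist G.adj (p (j + 1)) (c (j + 2)) = (1, s - 1) :=
      G.tdist_eq_of_pnum_ne_zero_out
        (G.pnum_ne_zero_iff.2 ⟨_, _, _, h₂, hcp j (by omega), hcp (j + 1) (by omega)⟩) h₂ hpj
    refine ⟨Function.update c (j + 1) (p (j + 1)), ?_, fun t ht => ?_, fun t ht => ?_⟩
    · simp [Function.update_of_ne (show s ≠ j + 1 by omega), hc]
    · rcases (by omega : t + 1 < j + 1 ∨ t = j ∨ t = j + 1 ∨ j + 1 < t) with h | rfl | rfl | h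
      · simpa [Function.update_of_ne (show t ≠ j + 1 by omega),
          Function.update_of_ne (show t + 1 ≠ j + 1 by omega)] using hcp t ht
      · simpa using hpj
      · simpa using hnew
      · simpa [Function.update_of_ne (show t ≠ j + 1 by omega),
          Function.update_of_ne (show t + 1 ≠ j + 1 by omega)] using hcp t ht
    · rcases ht.lt_or_eq with ht | rfl
      · simpa [Function.update_of_ne (show t ≠ j + 1 by omega)] using hcq t (by omega)
      · simp

theorem Pure.tdist_of_path (hs : G.Pure s) {j : ℕ} {p : ℕ → V}
    (hp : IsTypedPath G.adj (1, s - 1) j p) (hjs : j < s) {a b : ℕ} (hab : a < b) (hb : b ≤ j) :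
    tdist G.adj (p a) (p b) = (b - a, s - (b - a)) := by
  obtain ⟨c, hc, hcp, hcq⟩ := hs.exists_circuit_of_path hp (by omega) hjs
  rw [← hcq a (by omega), ← hcq b hb]
  exact tdist_of_circuit G.strong hc hcp hab (by omega) (by omega)

theorem Pure.exists_path_of_tdist (hs : G.Pure s) (hB : Attained G.adj (1, s - 1)) {m : ℕ}
    (hm : 1 ≤ m) (hms : m < s) {x y : V} (hxy : tdist G.adj x y = (m, s - m)) :
    ∃ p : ℕ → V, p 0 = x ∧ p m = y ∧ IsTypedPath G.adj (1, s - 1) m p := by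
  induction m, hm using Nat.le_induction generalizing x with
  | base =>
    refine ⟨Stream'.cons x fun _ => y, rfl, rfl, fun t ht => ?_⟩
    obtain rfl : t = 0 := by omega
    exact hxy
  | succ m hm ih =>
    obtain ⟨q, hq₀, hq⟩ := G.exists_typedPath hB x
    have hq₁ := hs.tdist_of_path (hq (m + 1)) hms (a := 0) (b := m + 1) (by omega) le_rfl
    have hq₂ := hs.tdist_of_path (hq (m + 1)) hms (a := 1) (b := m + 1) (by omega) le_rfl
    simp only [Nat.sub_zero, Nat.add_sub_cancel, hq₀] at hq₁ hq₂
    obtain ⟨z, hxz, hzy⟩ := G.exists_of_pnum_ne_zero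
      (G.pnum_ne_zero_iff.2 ⟨_, _, _, hq₁, hq₀ ▸ hq 1 0 one_pos, hq₂⟩) hxy
    obtain ⟨p, hp₀, hpm, hp⟩ := ih (by omega) hzy
    exact ⟨Stream'.cons x p, rfl, hpm, IsTypedPath.cons (hp₀ ▸ hxz) hp⟩

theorem Pure.prodS_singleton_eq_of_path (hs : G.Pure s) (hB : Attained G.adj (1, s - 1))
    {i h : ℕ × ℕ} (hi : Attained G.adj i) {m : ℕ} (hm : 1 ≤ m) (hms : m < s)
    (hdet : ∀ x (p : ℕ → V), tdist G.adj x (p 0) = i → IsTypedPath G.adj (1, s - 1) m p →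
      tdist G.adj x (p m) = h) :
    G.prodS {i} {(m, s - m)} = {h} := by
  refine G.prodS_singleton_eq ?_ fun x y z hxz hzy => ?_
  · obtain ⟨x, z, hxz⟩ := hi
    obtain ⟨p, rfl, hp⟩ := G.exists_typedPath hB z
    exact ⟨x, p m, p 0, hxz, by simpa using hs.tdist_of_path (hp m) hms (a := 0) (b := m) hm le_rfl⟩
  · obtain ⟨p, rfl, rfl, hp⟩ := hs.exists_path_of_tdist hB hm hms hzy
    exact hdet x p hxz hp

theorem Pure.pow_eq (hs : G.Pure s) (hB : Attained G.adj (1, s - 1)) {m : ℕ} (hm : 1 ≤ m)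
    (hms : m < s) : G.pow (1, s - 1) m = {(m, s - m)} := by
  induction m, hm using Nat.le_induction with
  | base => rfl
  | succ m hm ih =>
    obtain ⟨m, rfl⟩ : ∃ m', m = m' + 1 := ⟨m - 1, by omega⟩
    rw [pow, ih (by omega), prodS_comm]
    refine hs.prodS_singleton_eq_of_path hB hB (by omega) (by omega) fun x p hx hp => ?_
    have := hs.tdist_of_path (IsTypedPath.cons hx hp) hms (a := 0) (b := m + 2) (by omega) le_rfl
    rwa [Nat.sub_zero] at this

theorem Pure.tdist_of_arc_of_path_ne (hs : G.Pure s) (hA : pnum G.adj (1, s - 1) (1, s) (1, s) ≠ 0)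
    {x : V} {j : ℕ} {p : ℕ → V} (hx : tdist G.adj x (p 0) = (1, s))
    (hp : IsTypedPath G.adj (1, s - 1) j p) (hj : 1 ≤ j) (hjs : j < s) :
    tdist G.adj x (p j) ≠ (j, s - j) := by
  intro hxp
  obtain ⟨e, rfl, he, he_path⟩ := hs.exists_path_of_tdist ⟨_, _, hp 0 hj⟩ hj hjs hxp
  have h₁ : tdist G.adj (p 0) (e 1) = (1, s) :=
    G.tdist_eq_of_pnum_ne_zero_out hA (he_path 0 hj) hx
  have h₂ := ddist_le_of_hasWalk (he_path.hasWalk G.strong hj le_rfl)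
  have h₃ := (tdist_eq_iff.1 (hs.tdist_of_path hp hjs (a := 0) (b := j) hj le_rfl)).2
  have := ddist_triangle G.strong (e 1) (e j) (p 0)
  rw [he] at h₂ this
  simp only [Nat.sub_zero] at h₃
  have := (tdist_eq_iff.1 h₁).2
  omega

theorem Pure.tdist_of_arc_of_path (hs : G.Pure s) (hA : pnum G.adj (1, s - 1) (1, s) (1, s) ≠ 0)
    {x : V} {j : ℕ} {p : ℕ → V} (hx : tdist G.adj x (p 0) = (1, s))
    (hp : IsTypedPath G.adj (1, s - 1) j p) (hj : 1 ≤ j) (hjs : j < s) :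
    tdist G.adj x (p j) = (j + 1, s - j) := by
  obtain ⟨c, hc, hcp, hcq⟩ := hs.exists_circuit_of_path hp hj hjs
  have hlast : tdist G.adj (c (s - 1)) (p 0) = (1, s - 1) := by
    have := hcp (s - 1) (by omega)
    rwa [Nat.sub_add_cancel (by omega), hc, hcq 0 (by omega)] at this
  have hxc : tdist G.adj (c (s - 1)) x = (1, s) := G.tdist_eq_of_pnum_ne_zero_in hA hlast hx
  obtain ⟨hxc₁, hxc₂⟩ := tdist_eq_iff.1 hxc
  obtain ⟨hx₁, hx₂⟩ := tdist_eq_iff.1 hx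
  obtain ⟨h0j, -⟩ := tdist_eq_iff.1 (hs.tdist_of_path hp hjs (a := 0) (b := j) hj le_rfl)
  rw [Nat.sub_zero] at h0j
  have up₁ : ddist G.adj x (p j) ≤ j + 1 := by
    have hw := (hasWalk_one_iff.2 (adj_of_ddist_eq_one G.strong hx₁)).append
      (hp.hasWalk G.strong (Nat.zero_le j) le_rfl)
    have := ddist_le_of_hasWalk hw
    omega
  have up₂ : ddist G.adj (p j) x ≤ s - j := by
    have hw := (hcp.hasWalk G.strong (a := j) (b := s - 1) (by omega) (by omega)).append
      (hasWalk_one_iff.2 (adj_of_ddist_eq_one G.strong hxc₁))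
    rw [hcq j le_rfl] at hw
    have := ddist_le_of_hasWalk hw
    omega
  have low₂ : s - j ≤ ddist G.adj (p j) x := by
    have := ddist_triangle G.strong (p 0) (p j) x
    omega
  have low₁ : j ≤ ddist G.adj x (p j) := by
    rcases (show j < s - 1 ∨ j = s - 1 by omega) with hj' | rfl
    · obtain ⟨-, hcj⟩ := tdist_eq_iff.1
        (tdist_of_circuit G.strong hc hcp (a := j) (b := s - 1) hj' (by omega) (by omega))
      have := ddist_triangle G.strong (c (s - 1)) x (c j)
      rw [hcq j le_rfl] at hcj this
      omega
    · rw [← hcq (s - 1) le_rfl]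
      omega
  refine tdist_eq_iff.2 ⟨?_, by omega⟩
  by_contra hne
  exact hs.tdist_of_arc_of_path_ne hA hx hp hj hjs (tdist_eq_iff.2 ⟨by omega, by omega⟩)

theorem Pure.prodS_arc_eq (hs : G.Pure s) (hA : pnum G.adj (1, s - 1) (1, s) (1, s) ≠ 0) {j : ℕ}
    (hj : 1 ≤ j) (hjs : j < s) : G.prodS {(1, s)} {(j, s - j)} = {(j + 1, s - j)} := by
  obtain ⟨x, y, z, hxy, hxz, -⟩ := G.pnum_ne_zero_iff.1 hA
  exact hs.prodS_singleton_eq_of_path ⟨x, y, hxy⟩ ⟨x, z, hxz⟩ hj hjs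
    fun _ _ hx hp => hs.tdist_of_arc_of_path hA hx hp hj hjs

end CTWDR

/-- Lemma 2.5(i): if `C(q)` exists, then
`Γ_{1,q-1} Γ_{1,q-2}^{i-1} = {Γ_{i,q-i}}` for `1 ≤ i ≤ q-1`. -/
theorem stmt4 {V : Type*} [Fintype V] (G : CTWDR V) (q : ℕ) (hC : G.Cexists q) :
    ∀ i, 1 ≤ i → i ≤ q - 1 →
      G.prodS {(1, q - 1)} (G.pow (1, q - 2) (i - 1)) = {(i, q - i)} := by
  intro i hi₁ hi₂
  obtain ⟨hA, hpure⟩ := hC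
  obtain ⟨x, y, z, hxy, hxz, -⟩ := G.pnum_ne_zero_iff.1 hA
  rw [show q - 2 = q - 1 - 1 by omega] at hA hxy ⊢
  obtain ⟨j, rfl⟩ : ∃ j, i = j + 1 := ⟨i - 1, by omega⟩
  rw [Nat.add_sub_cancel, show q - (j + 1) = q - 1 - j by omega]
  rcases j.eq_zero_or_pos with rfl | hj
  · exact G.prodS_singleton_zero ⟨x, z, hxz⟩
  · rw [hpure.pow_eq ⟨x, y, hxy⟩ hj (by omega), hpure.prodS_arc_eq hA hj (by omega)]
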